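/- arXiv:1803.06537 — 3 statements merged into one kernel-verified Lean document; each statement's English description precedes it below -/
import Mathlib

section
/- Let p ≥ 1 affine maps f_i(x) = A_i x + b_i on ℝ^D, let K_0 be a nonempty compact subset of ℝ^D, and suppose the normalizing sequence (d_n)_n of the renormalized Hutchinson orbit of K_0 converges to d. Then: (1) for every i ∈ {1,…,p}, ‖b_i‖ ≤ ‖d·Id − A_i‖; (2) for every i such that d is not an eigenvalue of A_i, ‖(d·Id − A_i)^{-1} b_i‖ ≤ 1; (3) if d > λ_H = max_{1≤i≤p} ‖A_i‖, then max_{1≤i≤p} ‖(d·Id − A_i)^{-1} b_i‖ ≤ 1 (all the matrices d·Id − A_i being invertible in this case). -/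
/-!
Follow a single map `f i` through the renormalized orbit: this gives points `y n ∈ K_n` with
`‖y (n + 1)‖ ≤ 1` and `d_n • y (n + 1) = A_i (y n) + b_i`. Since `d_n → d`, the Cesàro means `u_N`
of this sequence satisfy `(d • Id - A_i) u_N → b_i`, the discrepancy between `y n` and `y (n + 1)`
telescoping away. As `‖u_N‖ ≤ 1`, this gives (1). In finite dimension a limit point `w` of `(u_N)`
solves `(d • Id - A_i) w = b_i` with `‖w‖ ≤ 1`; it is the only solution when `d` is not an
eigenvalue of `A_i`, which gives (2), and `d > ‖A_i‖` excludes that `d` is an eigenvalue, giving (3).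
-/

open Metric Filter Pointwise Topology

noncomputable section

/-- The radius function `ρ(K) = sup {‖x‖ : x ∈ K}`. -/
def rad {D : ℕ} (K : Set (EuclideanSpace ℝ (Fin D))) : ℝ := sSup (norm '' K)

/-- The Hutchinson operator `H(K) = ⋃ i, f i '' K`. -/
def hutch {D p : ℕ} (f : Fin (p + 1) → EuclideanSpace ℝ (Fin D) → EuclideanSpace ℝ (Fin D))
    (K : Set (EuclideanSpace ℝ (Fin D))) : Set (EuclideanSpace ℝ (Fin D)) := ⋃ i, f i '' K

/-- The renormalized Hutchinson operator `H_ρ(K) = ρ(H(K))⁻¹ • H(K)`. -/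
def hutchRho {D p : ℕ} (f : Fin (p + 1) → EuclideanSpace ℝ (Fin D) → EuclideanSpace ℝ (Fin D))
    (K : Set (EuclideanSpace ℝ (Fin D))) : Set (EuclideanSpace ℝ (Fin D)) :=
  (rad (hutch f K))⁻¹ • hutch f K

section NormedSpace

variable {E : Type*} [NormedAddCommGroup E] [NormedSpace ℝ E]

open Finset in
lemma norm_cesaro_le {y : ℕ → E} {C : ℝ} (hy : ∀ n, ‖y n‖ ≤ C) (N : ℕ) :
    ‖(N : ℝ)⁻¹ • ∑ n ∈ range N, y n‖ ≤ C := by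
  rcases N.eq_zero_or_pos with rfl | hN
  · simpa using (norm_nonneg _).trans (hy 0)
  have hsum : ‖∑ n ∈ range N, y n‖ ≤ N * C := by
    simpa using norm_sum_le_of_le (range N) fun n _ => hy n
  rw [norm_smul, Real.norm_eq_abs, abs_of_nonneg (by positivity), inv_mul_le_iff₀ (by positivity)]
  exact hsum

open Finset in
lemma tendsto_cesaro_sub_succ {y : ℕ → E} {C : ℝ} (hy : ∀ n, ‖y n‖ ≤ C) :
    Tendsto (fun N : ℕ => (N : ℝ)⁻¹ • ∑ n ∈ range N, (y n - y (n + 1))) atTop (𝓝 0) := by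
  have hbound : ∀ N : ℕ, ‖(N : ℝ)⁻¹ • ∑ n ∈ range N, (y n - y (n + 1))‖ ≤ (N : ℝ)⁻¹ * (2 * C) := by
    intro N
    rw [sum_range_sub', norm_smul, Real.norm_eq_abs, abs_of_nonneg (by positivity)]
    gcongr
    linarith [norm_sub_le (y 0) (y N), hy 0, hy N]
  refine squeeze_zero_norm hbound ?_
  simpa using tendsto_inv_atTop_nhds_zero_nat.mul_const (2 * C)

/-- Witness: the Cesàro means of `y`, for which the mismatch between `y n` and `y (n + 1)`
telescopes away. -/
lemma exists_tendsto_smul_sub_apply_of_recurrence (T : E →L[ℝ] E) (b : E) {c : ℕ → ℝ} {d : ℝ}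
    (hc : Tendsto c atTop (𝓝 d)) {y : ℕ → E} (hy : ∀ n, ‖y n‖ ≤ 1)
    (hrec : ∀ n, c n • y (n + 1) = T (y n) + b) :
    ∃ u : ℕ → E, (∀ N, ‖u N‖ ≤ 1) ∧ Tendsto (fun N => d • u N - T (u N)) atTop (𝓝 b) := by
  refine ⟨fun N => (N : ℝ)⁻¹ • ∑ n ∈ Finset.range N, y n, norm_cesaro_le hy, ?_⟩
  have hsplit : ∀ n, d • y n - T (y n) = (b + (d - c n) • y (n + 1)) + d • (y n - y (n + 1)) := by
    intro n
    rw [eq_sub_of_add_eq (hrec n).symm, sub_smul, smul_sub]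
    abel
  have herr : Tendsto (fun n => b + (d - c n) • y (n + 1)) atTop (𝓝 b) := by
    have hsmall : Tendsto (fun n => (d - c n) • y (n + 1)) atTop (𝓝 0) := by
      have hgap : Tendsto (fun n => ‖d - c n‖) atTop (𝓝 0) := by
        simpa using ((tendsto_const_nhds (x := d)).sub hc).norm
      refine squeeze_zero_norm (fun n => ?_) hgap
      rw [norm_smul]
      exact mul_le_of_le_one_right (norm_nonneg _) (hy (n + 1))
    simpa using tendsto_const_nhds.add hsmall
  have hlim := herr.cesaro_smul.add ((tendsto_cesaro_sub_succ hy).const_smul d)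
  rw [smul_zero, add_zero] at hlim
  refine hlim.congr fun N => ?_
  simp only [smul_comm d ((N : ℝ)⁻¹), map_smul, map_sum, ← smul_sub, Finset.smul_sum,
    ← Finset.sum_sub_distrib, hsplit, Finset.sum_add_distrib, smul_add]

lemma norm_le_opNorm_smul_id_sub_of_tendsto {T : E →L[ℝ] E} {b : E} {d : ℝ} {u : ℕ → E}
    (hu : ∀ N, ‖u N‖ ≤ 1) (hlim : Tendsto (fun N => d • u N - T (u N)) atTop (𝓝 b)) :
    ‖b‖ ≤ ‖d • ContinuousLinearMap.id ℝ E - T‖ := by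
  refine le_of_tendsto' hlim.norm fun N => ?_
  calc ‖d • u N - T (u N)‖ = ‖(d • ContinuousLinearMap.id ℝ E - T) (u N)‖ := rfl
    _ ≤ ‖d • ContinuousLinearMap.id ℝ E - T‖ * ‖u N‖ := ContinuousLinearMap.le_opNorm _ _
    _ ≤ ‖d • ContinuousLinearMap.id ℝ E - T‖ := mul_le_of_le_one_right (norm_nonneg _) (hu N)

lemma exists_norm_le_one_smul_sub_apply_eq [ProperSpace E] {T : E →L[ℝ] E} {b : E} {d : ℝ}
    {u : ℕ → E} (hu : ∀ N, ‖u N‖ ≤ 1)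
    (hlim : Tendsto (fun N => d • u N - T (u N)) atTop (𝓝 b)) :
    ∃ w, ‖w‖ ≤ 1 ∧ d • w - T w = b := by
  obtain ⟨w, hw, φ, hφ, hconv⟩ :=
    (isCompact_closedBall (0 : E) 1).tendsto_subseq fun N => mem_closedBall_zero_iff.2 (hu N)
  have hcont : Continuous fun z : E => d • z - T z := (continuous_const_smul d).sub T.continuous
  exact ⟨w, mem_closedBall_zero_iff.1 hw,
    tendsto_nhds_unique ((hcont.tendsto w).comp hconv) (hlim.comp hφ.tendsto_atTop)⟩

lemma eq_of_smul_sub_apply_eq {T : E →L[ℝ] E} {d : ℝ}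
    (hd : ¬ Module.End.HasEigenvalue T.toLinearMap d) {x w : E}
    (hxw : d • x - T x = d • w - T w) : x = w := by
  by_contra hne
  refine hd (Module.End.hasEigenvalue_of_hasEigenvector ⟨?_, sub_ne_zero.2 hne⟩)
  rw [Module.End.mem_eigenspace_iff, ContinuousLinearMap.coe_coe, map_sub, smul_sub,
    sub_eq_sub_iff_sub_eq_sub.1 hxw]

lemma not_hasEigenvalue_of_opNorm_lt {T : E →L[ℝ] E} {d : ℝ} (hT : ‖T‖ < d) :
    ¬ Module.End.HasEigenvalue T.toLinearMap d := by
  intro hev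
  obtain ⟨z, hz⟩ := hev.exists_hasEigenvector
  have hz_pos : 0 < ‖z‖ := norm_pos_iff.2 hz.2
  have : d * ‖z‖ ≤ ‖T‖ * ‖z‖ :=
    calc d * ‖z‖ = ‖T z‖ := by
          rw [show T z = d • z from hz.apply_eq_smul, norm_smul, Real.norm_of_nonneg
            ((norm_nonneg T).trans hT.le)]
      _ ≤ ‖T‖ * ‖z‖ := T.le_opNorm z
  exact hT.not_ge (le_of_mul_le_mul_right this hz_pos)

end NormedSpace

section Hutchinson

variable {D p : ℕ} {f : Fin (p + 1) → EuclideanSpace ℝ (Fin D) → EuclideanSpace ℝ (Fin D)}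

lemma IsCompact.hutch (hf : ∀ i, Continuous (f i)) {K : Set (EuclideanSpace ℝ (Fin D))}
    (hK : IsCompact K) : IsCompact (hutch f K) :=
  isCompact_iUnion fun i => hK.image (hf i)

lemma isCompact_iterate_hutchRho (hf : ∀ i, Continuous (f i)) {K₀ : Set (EuclideanSpace ℝ (Fin D))}
    (hK₀ : IsCompact K₀) (n : ℕ) : IsCompact ((hutchRho f)^[n] K₀) := by
  induction n with
  | zero => exact hK₀
  | succ n ih =>
    rw [Function.iterate_succ_apply', hutchRho, ← Set.image_smul]
    exact (ih.hutch hf).image (continuous_const_smul _)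

lemma norm_le_one_of_mem_hutchRho (hf : ∀ i, Continuous (f i))
    {K : Set (EuclideanSpace ℝ (Fin D))} (hK : IsCompact K) {z : EuclideanSpace ℝ (Fin D)}
    (hz : z ∈ hutchRho f K) : ‖z‖ ≤ 1 := by
  obtain ⟨w, hw, rfl⟩ := Set.mem_smul_set.1 hz
  have hw_le : ‖w‖ ≤ rad (hutch f K) :=
    le_csSup ((hK.hutch hf).image continuous_norm).bddAbove ⟨w, hw, rfl⟩
  have hrad : 0 ≤ rad (hutch f K) := (norm_nonneg w).trans hw_le
  rw [norm_smul, Real.norm_of_nonneg (inv_nonneg.2 hrad)]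
  exact inv_mul_le_one_of_le₀ hw_le hrad

lemma exists_seq_mem_iterate_hutchRho (i : Fin (p + 1)) {K₀ : Set (EuclideanSpace ℝ (Fin D))}
    (hK₀ : K₀.Nonempty) :
    ∃ y : ℕ → EuclideanSpace ℝ (Fin D), (∀ n, y n ∈ (hutchRho f)^[n] K₀) ∧
      ∀ n, y (n + 1) = (rad (hutch f ((hutchRho f)^[n] K₀)))⁻¹ • f i (y n) := by
  obtain ⟨x₀, hx₀⟩ := hK₀
  let y : ℕ → EuclideanSpace ℝ (Fin D) :=
    fun n => Nat.rec x₀ (fun n yn => (rad (hutch f ((hutchRho f)^[n] K₀)))⁻¹ • f i yn) n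
  refine ⟨y, fun n => ?_, fun n => rfl⟩
  induction n with
  | zero => exact hx₀
  | succ n ih =>
    rw [Function.iterate_succ_apply']
    exact Set.smul_mem_smul_set (Set.mem_iUnion.2 ⟨i, Set.mem_image_of_mem _ ih⟩)

lemma exists_tendsto_smul_sub_apply_of_tendsto_rad
    (A : Fin (p + 1) → EuclideanSpace ℝ (Fin D) →L[ℝ] EuclideanSpace ℝ (Fin D))
    (b : Fin (p + 1) → EuclideanSpace ℝ (Fin D))
    (hf : ∀ i x, f i x = A i x + b i) {K₀ : Set (EuclideanSpace ℝ (Fin D))}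
    (hK₀c : IsCompact K₀) (hK₀ne : K₀.Nonempty)
    (hpos : ∀ n, 0 < rad (hutch f ((hutchRho f)^[n] K₀))) {d : ℝ}
    (hd : Tendsto (fun n => rad (hutch f ((hutchRho f)^[n] K₀))) atTop (𝓝 d))
    (i : Fin (p + 1)) :
    ∃ u : ℕ → EuclideanSpace ℝ (Fin D), (∀ N, ‖u N‖ ≤ 1) ∧
      Tendsto (fun N => d • u N - A i (u N)) atTop (𝓝 (b i)) := by
  have hfc : ∀ i, Continuous (f i) := fun i =>
    (continuous_congr (hf i)).2 ((A i).continuous.add continuous_const)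
  obtain ⟨y, hy_mem, hy_succ⟩ := exists_seq_mem_iterate_hutchRho i hK₀ne
  have hy_norm : ∀ n, ‖y (n + 1)‖ ≤ 1 := fun n => by
    refine norm_le_one_of_mem_hutchRho hfc (isCompact_iterate_hutchRho hfc hK₀c n) ?_
    simpa only [Function.iterate_succ_apply'] using hy_mem (n + 1)
  refine exists_tendsto_smul_sub_apply_of_recurrence (A i) (b i)
    (hd.comp (tendsto_add_atTop_nat 1)) hy_norm fun n => ?_
  rw [Function.comp_apply, hy_succ (n + 1), smul_inv_smul₀ (hpos (n + 1)).ne', hf]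

end Hutchinson

/-- Proposition `prop:majd`. If `(d_n)` converges to `d`, then
(1) `‖b_i‖ ≤ ‖d·Id − A_i‖` for all `i`;
(2) if `d` is not an eigenvalue of `A_i` then `‖(d·Id − A_i)⁻¹ b_i‖ ≤ 1` (expressed via the
unique solution `x` of `(d·Id − A_i) x = b_i`);
(3) if `d > λ_H` then this holds for every `i`. -/
theorem stmt2 {D p : ℕ}
    (A : Fin (p + 1) → EuclideanSpace ℝ (Fin D) →L[ℝ] EuclideanSpace ℝ (Fin D))
    (b : Fin (p + 1) → EuclideanSpace ℝ (Fin D))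
    (f : Fin (p + 1) → EuclideanSpace ℝ (Fin D) → EuclideanSpace ℝ (Fin D))
    (hf : ∀ i x, f i x = A i x + b i)
    (K₀ : Set (EuclideanSpace ℝ (Fin D))) (hK₀c : IsCompact K₀) (hK₀ne : K₀.Nonempty)
    (hpos : ∀ n, 0 < rad (hutch f ((hutchRho f)^[n] K₀)))
    (d : ℝ) (hd : Tendsto (fun n => rad (hutch f ((hutchRho f)^[n] K₀))) atTop (𝓝 d)) :
    (∀ i, ‖b i‖ ≤ ‖d • ContinuousLinearMap.id ℝ (EuclideanSpace ℝ (Fin D)) - A i‖) ∧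
    (∀ i, ¬ Module.End.HasEigenvalue ((A i).toLinearMap) d →
      ∀ x, d • x - A i x = b i → ‖x‖ ≤ 1) ∧
    (Finset.univ.sup' Finset.univ_nonempty (fun i => ‖A i‖) < d →
      ∀ i, ∀ x, d • x - A i x = b i → ‖x‖ ≤ 1) := by
  have approx := fun i =>
    exists_tendsto_smul_sub_apply_of_tendsto_rad A b hf hK₀c hK₀ne hpos hd i
  have part2 : ∀ i, ¬ Module.End.HasEigenvalue ((A i).toLinearMap) d →
      ∀ x, d • x - A i x = b i → ‖x‖ ≤ 1 := by
    intro i hev x hx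
    obtain ⟨u, hu, hlim⟩ := approx i
    obtain ⟨w, hw, hw_eq⟩ := exists_norm_le_one_smul_sub_apply_eq hu hlim
    rwa [eq_of_smul_sub_apply_eq hev (hx.trans hw_eq.symm)]
  refine ⟨fun i => ?_, part2, fun hlt i => part2 i (not_hasEigenvalue_of_opNorm_lt ?_)⟩
  · obtain ⟨u, hu, hlim⟩ := approx i
    exact norm_le_opNorm_smul_id_sub_of_tendsto hu hlim
  · exact (Finset.le_sup' (fun j => ‖A j‖) (Finset.mem_univ i)).trans_lt hlt
end
end

section
/- Let p ≥ 1 linear maps f_i on ℝ^D and suppose there exist subspaces V, W ⊆ ℝ^D with V ⊕ W = ℝ^D such that for all i: (i) (f_i − Id)(V) ⊆ W; (ii) f_i(W) ⊆ W and the induced map f_{i,W} : W → W is a contraction. Then for every nonempty compact K_0 ⊆ ℝ^D, the sequence (H^n(K_0))_n converges in the Hausdorff metric to L = cl(⋃_{v_0 ∈ p_{V,W}(K_0)} (v_0 + L̃(v_0))), where p_{V,W} is the projection onto V along W and L̃(v_0) ⊆ W is the attractor of the contractive IFS {f̃_1,…,f̃_p} on W defined by f̃_i(w) = f_{i,W}(w)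 + (f_i − Id)(v_0). In particular, p_{V,W}(L) = p_{V,W}(K_0). -/
/-!
By (i) and (ii), `f_i (v + w) = v + f̃_i^v w` for `v ∈ V`, `w ∈ W`, where `f̃^v` is the affine IFS
`w ↦ f_{i,W} w + (f_i - Id) v` on `W`. So `H` maps each fiber `v + W` to itself and, conjugated by
the translation `w ↦ v + w`, acts there as the Hutchinson operator of `f̃^v`, which is a contraction
of the complete space of nonempty compact subsets of `W` with fixed point `L̃(v)`. For `x = v + w`
the a priori estimate of the Banach fixed point theorem, started at `{w}`, gives
`d_H(H^n {x}, v + L̃(v)) ≤ c^n max_i ‖f_i x - x‖ / (1 - c)`, which is uniform for `x` in the compact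
set `K₀`. Since `H^n K₀ = ⋃_{x ∈ K₀} H^n {x}` and the Hausdorff distance between two unions is at
most the supremum of the distances between corresponding pieces, `H^n K₀ → L`. Finally
`p_{V,W}` collapses each fiber `v + L̃(v)` to `{v}`.
-/

open Metric Filter Pointwise Topology

noncomputable section

/-- The projection onto `V` along `W` for complementary subspaces `V ⊕ W = ℝ^D`. -/
def projVW {D : ℕ} (V W : Submodule ℝ (EuclideanSpace ℝ (Fin D))) (h : IsCompl V W) :
    EuclideanSpace ℝ (Fin D) →ₗ[ℝ] EuclideanSpace ℝ (Fin D) :=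
  V.subtype ∘ₗ Submodule.linearProjOfIsCompl V W h

open TopologicalSpace (NonemptyCompacts)
open scoped NNReal ENNReal

section Hutchinson

variable {X Y ι : Type*}

def hutchinson (g : ι → X → X) (S : Set X) : Set X := ⋃ i, g i '' S

lemma hutchinson_iUnion (g : ι → X → X) {κ : Sort*} (s : κ → Set X) :
    hutchinson g (⋃ j, s j) = ⋃ j, hutchinson g (s j) := by
  simp only [hutchinson, Set.image_iUnion]
  exact Set.iUnion_comm _

lemma hutchinson_iterate_iUnion (g : ι → X → X) (n : ℕ) {κ : Sort*} (s : κ → Set X) :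
    (hutchinson g)^[n] (⋃ j, s j) = ⋃ j, (hutchinson g)^[n] (s j) := by
  induction n generalizing s with
  | zero => rfl
  | succ n ih => rw [Function.iterate_succ_apply, hutchinson_iUnion, ih]; rfl

lemma hutchinson_iterate_eq_biUnion (g : ι → X → X) (n : ℕ) (S : Set X) :
    (hutchinson g)^[n] S = ⋃ x ∈ S, (hutchinson g)^[n] {x} := by
  conv_lhs => rw [← Set.biUnion_of_singleton S]
  simp only [hutchinson_iterate_iUnion]

lemma semiconj_image_hutchinson {f : ι → Y → Y} {g : ι → X → X} {φ : X → Y}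
    (h : ∀ i, Function.Semiconj φ (g i) (f i)) :
    Function.Semiconj (φ '' ·) (hutchinson g) (hutchinson f) := fun S => by
  simp only [hutchinson, Set.image_iUnion, Set.image_image, (h _).eq]

end Hutchinson

lemma LipschitzWith.hausdorffEDist_image_le {X Y : Type*} [PseudoEMetricSpace X]
    [PseudoEMetricSpace Y] {K : ℝ≥0} {f : X → Y} (hf : LipschitzWith K f)
    {s t : Set X} (hs : IsCompact s) (ht : IsCompact t) (hs₀ : s.Nonempty) (ht₀ : t.Nonempty) :
    hausdorffEDist (f '' s) (f '' t) ≤ K * hausdorffEDist s t := by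
  have key : ∀ {s t : Set X}, IsCompact t → t.Nonempty → ∀ x ∈ s,
      ∃ y ∈ f '' t, edist (f x) y ≤ K * hausdorffEDist s t := by
    intro s t ht ht₀ x hx
    obtain ⟨y, hy, hxy⟩ := ht.exists_infEDist_eq_edist ht₀ x
    refine ⟨f y, Set.mem_image_of_mem f hy, (hf.edist_le_mul x y).trans ?_⟩
    gcongr
    exact hxy ▸ infEDist_le_hausdorffEDist_of_mem hx
  refine hausdorffEDist_le_of_mem_edist ?_ ?_
  · rintro _ ⟨x, hx, rfl⟩
    exact key ht ht₀ x hx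
  · rintro _ ⟨y, hy, rfl⟩
    rw [hausdorffEDist_comm]
    exact key hs hs₀ y hy

section Attractor

variable {X ι : Type*} [MetricSpace X] [Finite ι] [Nonempty ι]

def hutchinsonOp (g : ι → X → X) (hg : ∀ i, Continuous (g i)) (K : NonemptyCompacts X) :
    NonemptyCompacts X :=
  ⟨⟨hutchinson g K, isCompact_iUnion fun i => K.isCompact.image (hg i)⟩,
    (K.nonempty.image (g (Classical.arbitrary ι))).mono (Set.subset_iUnion_of_subset _ le_rfl)⟩

@[simp]
lemma coe_hutchinsonOp (g : ι → X → X) (hg : ∀ i, Continuous (g i)) (K : NonemptyCompacts X) :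
    (hutchinsonOp g hg K : Set X) = hutchinson g K := rfl

lemma coe_hutchinsonOp_iterate (g : ι → X → X) (hg : ∀ i, Continuous (g i)) (n : ℕ)
    (K : NonemptyCompacts X) :
    ((hutchinsonOp g hg)^[n] K : Set X) = (hutchinson g)^[n] K := by
  induction n generalizing K with
  | zero => rfl
  | succ n ih => rw [Function.iterate_succ_apply, ih, Function.iterate_succ_apply]; rfl

lemma lipschitzWith_hutchinsonOp {K : ℝ≥0} {g : ι → X → X} (hg : ∀ i, LipschitzWith K (g i)) :
    LipschitzWith K (hutchinsonOp g fun i => (hg i).continuous) := by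
  refine fun S T => hausdorffEDist_iUnion_le.trans (iSup_le fun i => ?_)
  exact (hg i).hausdorffEDist_image_le S.isCompact T.isCompact S.nonempty T.nonempty

lemma dist_singleton_hutchinsonOp_le {g : ι → X → X} (hg : ∀ i, Continuous (g i)) {x : X} {r : ℝ}
    (hr : ∀ i, dist x (g i x) ≤ r) :
    dist ({x} : NonemptyCompacts X) (hutchinsonOp g hg {x}) ≤ r := by
  have hgx : hutchinson g {x} = Set.range (g · x) := by simp [hutchinson, Set.range]
  rw [NonemptyCompacts.dist_eq, coe_hutchinsonOp, NonemptyCompacts.coe_singleton, hgx]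
  refine hausdorffDist_le_of_mem_dist (dist_nonneg.trans (hr (Classical.arbitrary ι))) ?_ ?_
  · simp only [Set.mem_singleton_iff, forall_eq, Set.exists_range_iff]
    exact ⟨_, hr (Classical.arbitrary ι)⟩
  · simp only [Set.forall_mem_range, Set.mem_singleton_iff, exists_eq_left]
    exact fun i => dist_comm x (g i x) ▸ hr i

variable [CompleteSpace X] [Nonempty X] {K : ℝ≥0}

def attractor (g : ι → X → X) (hK : K < 1) (hg : ∀ i, LipschitzWith K (g i)) :
    NonemptyCompacts X :=
  ContractingWith.fixedPoint _ ⟨hK, lipschitzWith_hutchinsonOp hg⟩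

lemma hutchinson_attractor {g : ι → X → X} (hK : K < 1) (hg : ∀ i, LipschitzWith K (g i)) :
    hutchinson g (attractor g hK hg) = attractor g hK hg :=
  congrArg SetLike.coe (ContractingWith.fixedPoint_isFixedPt (f := hutchinsonOp g _) _)

lemma dist_hutchinsonOp_iterate_attractor_le {g : ι → X → X} (hK : K < 1)
    (hg : ∀ i, LipschitzWith K (g i)) (S : NonemptyCompacts X) (n : ℕ) :
    dist ((hutchinsonOp g fun i => (hg i).continuous)^[n] S) (attractor g hK hg) ≤
      dist S (hutchinsonOp g (fun i => (hg i).continuous) S) * K ^ n / (1 - K) :=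
  ContractingWith.apriori_dist_iterate_fixedPoint_le _ S n

end Attractor

lemma image_closure_eq_of_image_eq {α β : Type*} [TopologicalSpace α] [TopologicalSpace β]
    [T2Space β] {f : α → β} (hf : Continuous f) {S K : Set α} (hK : IsCompact K)
    (h : f '' S = f '' K) : f '' closure S = f '' K := by
  refine Set.Subset.antisymm ?_ (h ▸ Set.image_mono subset_closure)
  calc f '' closure S ⊆ closure (f '' S) := image_closure_subset_closure_image hf
    _ = f '' K := by rw [h, (hK.image hf).isClosed.closure_eq]

section Fiber

variable {E ι : Type*} [NormedAddCommGroup E] [NormedSpace ℝ E] {A : ι → E →L[ℝ] E}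
  {V W : Submodule ℝ E}

lemma exists_uniform_contraction [Finite ι] [Nonempty ι]
    (hA : ∀ i, ∃ c : ℝ, 0 ≤ c ∧ c < 1 ∧ ∀ w ∈ W, ‖A i w‖ ≤ c * ‖w‖) :
    ∃ c : ℝ≥0, c < 1 ∧ ∀ i, ∀ w ∈ W, ‖A i w‖ ≤ c * ‖w‖ := by
  choose c hc₀ hc₁ hc using hA
  obtain ⟨i₀, hi₀⟩ := Finite.exists_max c
  exact ⟨⟨c i₀, hc₀ i₀⟩, hc₁ i₀, fun i w hw => (hc i w hw).trans (by gcongr; exact hi₀ i)⟩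

variable (hV : ∀ i, ∀ v ∈ V, A i v - v ∈ W) (hW : ∀ i, ∀ w ∈ W, A i w ∈ W)

def fiberMap (v : V) (i : ι) (w : W) : W :=
  ⟨A i w + (A i v - v), W.add_mem (hW i w w.2) (hV i v v.2)⟩

lemma semiconj_subtype_fiberMap (v : V) (i : ι) :
    Function.Semiconj Subtype.val (fiberMap hV hW v i) (fun w => A i w + (A i v - v)) :=
  fun _ => rfl

lemma semiconj_add_fiberMap (v : V) (i : ι) :
    Function.Semiconj (fun w : W => (v : E) + w) (fiberMap hV hW v i) (A i) := fun w => by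
  simp only [fiberMap, map_add]
  abel

variable {c : ℝ≥0} (hc : ∀ i, ∀ w ∈ W, ‖A i w‖ ≤ c * ‖w‖)
include hc

lemma lipschitzWith_fiberMap (v : V) (i : ι) : LipschitzWith c (fiberMap hV hW v i) :=
  LipschitzWith.of_dist_le_mul fun w w' => by
    rw [Subtype.dist_eq, Subtype.dist_eq]
    change dist (A i w + (A i v - v)) (A i w' + (A i v - v)) ≤ c * dist (w : E) w'
    rw [dist_add_right, dist_eq_norm, dist_eq_norm, ← map_sub]
    exact hc i _ (W.sub_mem w.2 w'.2)

variable [CompleteSpace W] [Fintype ι] [Nonempty ι] (hc₁ : c < 1)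

def fiberAttractor (v : V) : NonemptyCompacts W :=
  attractor (fiberMap hV hW v) hc₁ (lipschitzWith_fiberMap hV hW hc v)

lemma hutchinson_image_val_fiberAttractor (v : V) :
    hutchinson (fun i w => A i w + (A i v - v))
        (Subtype.val '' (fiberAttractor hV hW hc hc₁ v : Set W)) =
      Subtype.val '' (fiberAttractor hV hW hc hc₁ v : Set W) := by
  rw [← (semiconj_image_hutchinson (semiconj_subtype_fiberMap hV hW v)).eq, fiberAttractor,
    hutchinson_attractor]

def fiberLimit (v : V) : Set E :=
  (fun w : W => (v : E) + w) '' (fiberAttractor hV hW hc hc₁ v : Set W)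

variable (h : IsCompl V W)

lemma hausdorffEDist_hutchinson_iterate_singleton_le {x : E} {r : ℝ}
    (hr : ∀ i, ‖A i x - x‖ ≤ r) (n : ℕ) :
    hausdorffEDist ((hutchinson fun i => A i)^[n] {x})
        (fiberLimit hV hW hc hc₁ (V.projectionOnto W h x)) ≤
      ENNReal.ofReal (r * c ^ n / (1 - c)) := by
  set v := V.projectionOnto W h x
  have hg := lipschitzWith_fiberMap hV hW hc v
  let w : W := ⟨x - v, V.sub_projection_mem h x⟩
  have hx : {x} = (fun w : W => (v : E) + w) '' ({w} : NonemptyCompacts W) := by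
    simp [w, v]
  have hw : ∀ i, dist w (fiberMap hV hW v i w) ≤ r := fun i => by
    have hgw : ((fiberMap hV hW v i w : W) : E) - w = A i x - x := by
      change A i (x - v) + (A i v - v) - (x - v) = A i x - x
      rw [map_sub]
      abel
    rw [Subtype.dist_eq, dist_comm, dist_eq_norm, hgw]
    exact hr i
  have hφ : Isometry fun w : W => (v : E) + w :=
    (isometry_add_left (v : E)).comp isometry_subtype_coe
  have h1c : (0 : ℝ) < 1 - c := sub_pos.2 hc₁
  have hr₀ : 0 ≤ r := (norm_nonneg _).trans (hr (Classical.arbitrary ι))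
  rw [hx, ← ((semiconj_image_hutchinson (semiconj_add_fiberMap hV hW v)).iterate_right n).eq,
    ← coe_hutchinsonOp_iterate _ fun i => (hg i).continuous, fiberLimit, hausdorffEDist_image hφ]
  refine (edist_le_ofReal (x := (hutchinsonOp _ fun i => (hg i).continuous)^[n] {w})
    (y := fiberAttractor hV hW hc hc₁ v) (by positivity)).2 ?_
  calc _ ≤ _ := dist_hutchinsonOp_iterate_attractor_le hc₁ hg {w} n
    _ ≤ r * c ^ n / (1 - c) := by gcongr; exact dist_singleton_hutchinsonOp_le _ hw

lemma hausdorffEDist_hutchinson_iterate_le {K₀ : Set E} {r : ℝ}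
    (hr : ∀ x ∈ K₀, ∀ i, ‖A i x - x‖ ≤ r) (n : ℕ) :
    hausdorffEDist ((hutchinson fun i => A i)^[n] K₀)
        (⋃ x ∈ K₀, fiberLimit hV hW hc hc₁ (V.projectionOnto W h x)) ≤
      ENNReal.ofReal (r * c ^ n / (1 - c)) := by
  rw [hutchinson_iterate_eq_biUnion]
  exact hausdorffEDist_iUnion_le.trans <| iSup_le fun x => hausdorffEDist_iUnion_le.trans <|
    iSup_le fun hx => hausdorffEDist_hutchinson_iterate_singleton_le hV hW hc hc₁ h (hr x hx) n

theorem tendsto_hausdorffDist_hutchinson_iterate {K₀ : Set E} (hK₀ : IsCompact K₀) :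
    Tendsto (fun n => hausdorffDist ((hutchinson fun i => A i)^[n] K₀)
      (⋃ x ∈ K₀, fiberLimit hV hW hc hc₁ (V.projectionOnto W h x))) atTop (𝓝 0) := by
  obtain ⟨C, hC⟩ := hK₀.exists_bound_of_continuousOn (f := fun x i => A i x - x) (by fun_prop)
  set r := max C 0
  have hr : ∀ x ∈ K₀, ∀ i, ‖A i x - x‖ ≤ r := fun x hx i =>
    (norm_le_pi_norm (fun i => A i x - x) i).trans ((hC x hx).trans (le_max_left C 0))
  have h1c : (0 : ℝ) < 1 - c := sub_pos.2 hc₁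
  have hlim : Tendsto (fun n : ℕ => r * c ^ n / (1 - c)) atTop (𝓝 0) := by
    simpa using ((tendsto_pow_atTop_nhds_zero_of_lt_one c.2 hc₁).const_mul r).div_const (1 - c)
  refine squeeze_zero (fun n => hausdorffDist_nonneg) (fun n => ?_) hlim
  exact ENNReal.toReal_le_of_le_ofReal (by positivity)
    (hausdorffEDist_hutchinson_iterate_le hV hW hc hc₁ h hr n)

lemma projection_image_fiberLimit (v : V) :
    V.projection W h '' fiberLimit hV hW hc hc₁ v = {(v : E)} := by
  have hvw : ∀ w : W, V.projection W h (v + w) = v := fun w => by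
    rw [map_add, Submodule.projection_apply_left, Submodule.projection_apply_right, add_zero]
  rw [fiberLimit, Set.image_image]
  simp only [hvw]
  exact (fiberAttractor hV hW hc hc₁ v).nonempty.image_const _

lemma projection_image_biUnion_fiberLimit (K₀ : Set E) :
    V.projection W h '' (⋃ x ∈ K₀, fiberLimit hV hW hc hc₁ (V.projectionOnto W h x)) =
      V.projection W h '' K₀ := by
  simp only [Set.image_iUnion₂, projection_image_fiberLimit, Submodule.coe_projectionOnto_apply]
  exact (Set.image_eq_iUnion _ _).symm

end Fiber

theorem stmt13_general {D p : ℕ}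
    (A : Fin (p + 1) → EuclideanSpace ℝ (Fin D) →L[ℝ] EuclideanSpace ℝ (Fin D))
    (f : Fin (p + 1) → EuclideanSpace ℝ (Fin D) → EuclideanSpace ℝ (Fin D))
    (hf : ∀ i x, f i x = A i x)
    (V W : Submodule ℝ (EuclideanSpace ℝ (Fin D))) (hVW : IsCompl V W)
    (hV : ∀ i, ∀ v ∈ V, A i v - v ∈ W)
    (hW : ∀ i, (∀ w ∈ W, A i w ∈ W) ∧
      (∃ c : ℝ, 0 ≤ c ∧ c < 1 ∧ ∀ w ∈ W, ‖A i w‖ ≤ c * ‖w‖))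
    (K₀ : Set (EuclideanSpace ℝ (Fin D))) (hK₀c : IsCompact K₀) :
    ∃ Lt : EuclideanSpace ℝ (Fin D) → Set (EuclideanSpace ℝ (Fin D)),
      (∀ v₀ ∈ projVW V W hVW '' K₀,
        Lt v₀ ⊆ (W : Set (EuclideanSpace ℝ (Fin D))) ∧ IsCompact (Lt v₀) ∧ (Lt v₀).Nonempty ∧
        (⋃ i, (fun w => A i w + (A i v₀ - v₀)) '' Lt v₀) = Lt v₀) ∧
      Tendsto (fun n => hausdorffDist ((hutch f)^[n] K₀)
        (closure (⋃ v₀ ∈ projVW V W hVW '' K₀, (fun w => v₀ + w) '' Lt v₀))) atTop (𝓝 0) ∧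
      projVW V W hVW ''
          closure (⋃ v₀ ∈ projVW V W hVW '' K₀, (fun w => v₀ + w) '' Lt v₀) =
        projVW V W hVW '' K₀ := by
  obtain rfl : f = fun i => ⇑(A i) := funext₂ hf
  obtain ⟨c, hc₁, hc⟩ := exists_uniform_contraction fun i => (hW i).2
  have hWA : ∀ i, ∀ w ∈ W, A i w ∈ W := fun i => (hW i).1
  have hpr : projVW V W hVW = V.projection W hVW := rfl
  set Lt := fun v₀ =>
    Subtype.val '' (fiberAttractor hV hWA hc hc₁ (V.projectionOnto W hVW v₀) : Set W)
  have hL : ⋃ v₀ ∈ projVW V W hVW '' K₀, (fun w => v₀ + w) '' Lt v₀ =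
      ⋃ x ∈ K₀, fiberLimit hV hWA hc hc₁ (V.projectionOnto W hVW x) := by
    simp only [Set.biUnion_image, Lt, hpr, Submodule.projectionOnto_projection, Set.image_image,
      fiberLimit, Submodule.coe_projectionOnto_apply]
  refine ⟨Lt, ?_, ?_, ?_⟩
  · rintro _ ⟨x, -, rfl⟩
    set L := fiberAttractor hV hWA hc hc₁ (V.projectionOnto W hVW x)
    simp only [Lt, hpr, Submodule.projectionOnto_projection]
    exact ⟨Subtype.coe_image_subset _ _, L.isCompact.image continuous_subtype_val,
      L.nonempty.image _, hutchinson_image_val_fiberAttractor hV hWA hc hc₁ _⟩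
  · simp only [hL, hausdorffDist_closure₂]
    exact tendsto_hausdorffDist_hutchinson_iterate hV hWA hc hc₁ hVW hK₀c
  · rw [hL, hpr]
    exact image_closure_eq_of_image_eq (LinearMap.continuous_of_finiteDimensional _) hK₀c
      (projection_image_biUnion_fiberLimit hV hWA hc hc₁ hVW K₀)

/-- Theorem `theo:linsup`. Suppose `ℝ^D = V ⊕ W`, `(f_i − Id)(V) ⊆ W`, each
`f_i` preserves `W` and the induced maps on `W` are contractions. Then `(H^n(K₀))_n` converges
for every nonempty compact `K₀` to `L = cl(⋃_{v₀ ∈ p_{V,W}(K₀)} (v₀ + L̃(v₀)))` where `L̃(v₀)`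
is the attractor of the contractive IFS `{w ↦ f_{i,W}(w) + (f_i − Id)(v₀)}` on `W`; in
particular `p_{V,W}(L) = p_{V,W}(K₀)`. -/
theorem stmt13 {D p : ℕ}
    (A : Fin (p + 1) → EuclideanSpace ℝ (Fin D) →L[ℝ] EuclideanSpace ℝ (Fin D))
    (f : Fin (p + 1) → EuclideanSpace ℝ (Fin D) → EuclideanSpace ℝ (Fin D))
    (hf : ∀ i x, f i x = A i x)
    (V W : Submodule ℝ (EuclideanSpace ℝ (Fin D))) (hVW : IsCompl V W)
    (hV : ∀ i, ∀ v ∈ V, A i v - v ∈ W)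
    (hW : ∀ i, (∀ w ∈ W, A i w ∈ W) ∧
      (∃ c : ℝ, 0 ≤ c ∧ c < 1 ∧ ∀ w ∈ W, ‖A i w‖ ≤ c * ‖w‖))
    (K₀ : Set (EuclideanSpace ℝ (Fin D))) (hK₀c : IsCompact K₀) (hK₀ne : K₀.Nonempty) :
    ∃ Lt : EuclideanSpace ℝ (Fin D) → Set (EuclideanSpace ℝ (Fin D)),
      (∀ v₀ ∈ projVW V W hVW '' K₀,
        Lt v₀ ⊆ (W : Set (EuclideanSpace ℝ (Fin D))) ∧ IsCompact (Lt v₀) ∧ (Lt v₀).Nonempty ∧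
        (⋃ i, (fun w => A i w + (A i v₀ - v₀)) '' Lt v₀) = Lt v₀) ∧
      Tendsto (fun n => hausdorffDist ((hutch f)^[n] K₀)
        (closure (⋃ v₀ ∈ projVW V W hVW '' K₀, (fun w => v₀ + w) '' Lt v₀))) atTop (𝓝 0) ∧
      projVW V W hVW ''
          closure (⋃ v₀ ∈ projVW V W hVW '' K₀, (fun w => v₀ + w) '' Lt v₀) =
        projVW V W hVW '' K₀ :=
  stmt13_general A f hf V W hVW hV hW K₀ hK₀c
end
end

section
/- Let p ≥ 1 linear maps f_i : ℝ² → ℝ² with matrices A_i = [[a_i, b_i],[c_i, d_i]] such that det(A_i) ≠ 0 and f_i(ℙ) = ℙ, where ℙ = {(x,y) ∈ ℝ² : x ≥ 0} \ {0}. Let K_0 ⊆ ℝ² be compact, nonempty, symmetric and star-shaped with respect to the origin, and assume (H^n(K_0))_n converges in the Hausdorff metric to a set L ≠ {0}. Then L is symmetric and star-shaped with respect to the origin, and its set of slopes S_L is a nonempty invariant set of the Hutchinson operator Ĥ = ⋃_{i=1}^p f̂_i, where f̂_i : [−∞,∞] → [−∞,∞] is the homographic function f̂_i(z) = (d_i z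 + c_i)/(b_i z + a_i), i.e., S_L = ⋃_{i=1}^p f̂_i(S_L). -/
open Metric Filter Pointwise Topology

noncomputable section

/-- The Hutchinson operator on `ℝ²`. -/
def hutch2 {p : ℕ} (f : Fin (p + 1) → ℝ × ℝ → ℝ × ℝ) (K : Set (ℝ × ℝ)) : Set (ℝ × ℝ) :=
  ⋃ i, f i '' K

/-- The closed half plane `ℙ = {(x,y) : x ≥ 0} \ {0}`. -/
def halfPlane : Set (ℝ × ℝ) := {v | 0 ≤ v.1} \ {0}

/-- The slope `tan θ ∈ [−∞, ∞]` of a point of `ℙ` written `(R cos θ, R sin θ)`,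
`θ ∈ [−π/2, π/2]`, with the convention `tan(±π/2) = ±∞`. -/
def slopePt (v : ℝ × ℝ) : EReal :=
  if v.1 = 0 then (if 0 < v.2 then ⊤ else ⊥) else ((v.2 / v.1 : ℝ) : EReal)

/-- The set of slopes `S_K` of a set `K ⊆ ℝ²`. -/
def slopes (K : Set (ℝ × ℝ)) : Set EReal := slopePt '' (K ∩ halfPlane)

/-- The homographic function `z ↦ (d z + c)/(b z + a)` on `[−∞, ∞]`. -/
def homog (a b c d : ℝ) (z : EReal) : EReal :=
  if z = ⊤ then (if b ≠ 0 then ((d / b : ℝ) : EReal) else (if 0 < d then ⊤ else ⊥))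
  else if z = ⊥ then (if b ≠ 0 then ((d / b : ℝ) : EReal) else (if 0 < d then ⊥ else ⊤))
  else if b * z.toReal + a = 0 then (if 0 < d * z.toReal + c then ⊤ else ⊥)
  else (((d * z.toReal + c) / (b * z.toReal + a) : ℝ) : EReal)

/-! The maps `v ↦ -v` and `v ↦ r • v` are Lipschitz and commute with every `f i`, so they map each
iterate `Hⁿ(K₀)` into itself, and this property passes to the Hausdorff limit `L`. The Hutchinson
operator is Lipschitz for the Hausdorff distance, so `H(L)` is the limit of `Hⁿ⁺¹(K₀)`, that is
`H(L) = L`. Finally each `f i` maps `ℙ` bijectively onto `ℙ`, and on `ℙ` the slope of `f i v` is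
`f̂ i` applied to the slope of `v`; hence `S_L = S_{H(L)} = Ĥ(S_L)`. -/

section Hausdorff

variable {α β ι : Type*} [PseudoEMetricSpace α] [PseudoEMetricSpace β]

-- Without `s.Nonempty` this fails for `s = ∅`, `C = 0`, where the right side is `0 * ⊤ = 0`.
theorem LipschitzWith.infEDist_image_le {C : NNReal} {g : α → β} (hg : LipschitzWith C g)
    (x : α) {s : Set α} (hs : s.Nonempty) : infEDist (g x) (g '' s) ≤ C * infEDist x s := by
  have : Nonempty s := hs.to_subtype
  calc infEDist (g x) (g '' s) ≤ ⨅ y : s, edist (g x) (g y) :=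
        le_iInf fun y => infEDist_le_edist_of_mem (Set.mem_image_of_mem g y.2)
    _ ≤ ⨅ y : s, C * edist x y := iInf_mono fun y => hg x y
    _ = C * infEDist x s := by rw [← ENNReal.mul_iInf (by simp), infEDist, iInf_subtype']

theorem LipschitzWith.hausdorffEDist_image_le_s15 {C : NNReal} {g : α → β} (hg : LipschitzWith C g)
    {s t : Set α} (hs : s.Nonempty) (ht : t.Nonempty) :
    hausdorffEDist (g '' s) (g '' t) ≤ C * hausdorffEDist s t := by
  refine hausdorffEDist_le_of_infEDist (Set.forall_mem_image.2 fun x hx => ?_)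
    (Set.forall_mem_image.2 fun x hx => ?_)
  · exact (hg.infEDist_image_le x ht).trans
      (mul_le_mul_right (infEDist_le_hausdorffEDist_of_mem hx) _)
  · rw [hausdorffEDist_comm]
    exact (hg.infEDist_image_le x hs).trans
      (mul_le_mul_right (infEDist_le_hausdorffEDist_of_mem hx) _)

theorem tendsto_hausdorffEDist_apply_of_le {l : Filter ι} {s : ι → Set α} {L : Set α}
    {F : Set α → Set β} {C : NNReal}
    (hF : ∀ i, hausdorffEDist (F (s i)) (F L) ≤ C * hausdorffEDist (s i) L)
    (hs : Tendsto (fun i => hausdorffEDist (s i) L) l (𝓝 0)) :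
    Tendsto (fun i => hausdorffEDist (F (s i)) (F L)) l (𝓝 0) := by
  have hC : Tendsto (fun i => (C : ENNReal) * hausdorffEDist (s i) L) l (𝓝 0) := by
    simpa using ENNReal.Tendsto.const_mul hs (Or.inr ENNReal.coe_ne_top)
  exact tendsto_of_tendsto_of_tendsto_of_le_of_le tendsto_const_nhds hC (fun _ => zero_le) hF

theorem subset_of_tendsto_hausdorffEDist {l : Filter ι} [l.NeBot] {s t : ι → Set α}
    {L M : Set α} (hM : IsClosed M) (hst : ∀ i, s i ⊆ t i)
    (hs : Tendsto (fun i => hausdorffEDist (s i) L) l (𝓝 0))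
    (ht : Tendsto (fun i => hausdorffEDist (t i) M) l (𝓝 0)) : L ⊆ M := by
  intro x hx
  rw [mem_iff_infEDist_zero_of_closed hM]
  refine le_antisymm (ge_of_tendsto' (by simpa using hs.add ht) fun i => ?_) zero_le
  calc infEDist x M ≤ infEDist x (t i) + hausdorffEDist (t i) M :=
        infEDist_le_infEDist_add_hausdorffEDist
    _ ≤ infEDist x (s i) + hausdorffEDist (t i) M := by gcongr; exact hst i
    _ ≤ hausdorffEDist (s i) L + hausdorffEDist (t i) M := by
        gcongr; rw [hausdorffEDist_comm]; exact infEDist_le_hausdorffEDist_of_mem hx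

theorem eq_of_tendsto_hausdorffEDist {l : Filter ι} [l.NeBot] {s : ι → Set α} {L M : Set α}
    (hL : IsClosed L) (hM : IsClosed M) (hsL : Tendsto (fun i => hausdorffEDist (s i) L) l (𝓝 0))
    (hsM : Tendsto (fun i => hausdorffEDist (s i) M) l (𝓝 0)) : L = M :=
  (subset_of_tendsto_hausdorffEDist hM (fun _ => subset_rfl) hsL hsM).antisymm
    (subset_of_tendsto_hausdorffEDist hL (fun _ => subset_rfl) hsM hsL)

theorem mapsTo_of_tendsto_hausdorffEDist {l : Filter ι} [l.NeBot] {s : ι → Set α} {L : Set α}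
    {C : NNReal} {g : α → α} (hg : LipschitzWith C g) (hgs : ∀ i, Set.MapsTo g (s i) (s i))
    (hsne : ∀ i, (s i).Nonempty) (hL : IsClosed L) (hLne : L.Nonempty)
    (hs : Tendsto (fun i => hausdorffEDist (s i) L) l (𝓝 0)) : Set.MapsTo g L L :=
  Set.mapsTo_iff_image_subset.2 <| subset_of_tendsto_hausdorffEDist hL
    (fun i => Set.mapsTo_iff_image_subset.1 (hgs i))
    (tendsto_hausdorffEDist_apply_of_le (fun i => hg.hausdorffEDist_image_le_s15 (hsne i) hLne) hs) hs

end Hausdorff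

section Hutchinson

variable {p : ℕ} {f : Fin (p + 1) → ℝ × ℝ → ℝ × ℝ}

theorem hutch2_mono : Monotone (hutch2 f) :=
  fun _ _ h => Set.iUnion_mono fun _ => Set.image_mono h

theorem nonempty_hutch2 {K : Set (ℝ × ℝ)} (hK : K.Nonempty) : (hutch2 f K).Nonempty :=
  Set.nonempty_iUnion.2 ⟨0, hK.image _⟩

theorem isCompact_hutch2 (hf : ∀ i, Continuous (f i)) {K : Set (ℝ × ℝ)} (hK : IsCompact K) :
    IsCompact (hutch2 f K) :=
  isCompact_iUnion fun i => hK.image (hf i)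

theorem nonempty_iterate_hutch2 {K : Set (ℝ × ℝ)} (hK : K.Nonempty) (n : ℕ) :
    ((hutch2 f)^[n] K).Nonempty :=
  Function.Iterate.rec Set.Nonempty hK (fun _ => nonempty_hutch2) n

theorem isCompact_iterate_hutch2 (hf : ∀ i, Continuous (f i)) {K : Set (ℝ × ℝ)}
    (hK : IsCompact K) (n : ℕ) : IsCompact ((hutch2 f)^[n] K) :=
  Function.Iterate.rec IsCompact hK (fun _ => isCompact_hutch2 hf) n

theorem image_hutch2 {g : ℝ × ℝ → ℝ × ℝ} (hg : ∀ i, Function.Commute g (f i)) (K : Set (ℝ × ℝ)) :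
    g '' hutch2 f K = hutch2 f (g '' K) := by
  simp only [hutch2, Set.image_iUnion]
  exact Set.iUnion_congr fun i => Set.image_comm (hg i).eq

theorem mapsTo_iterate_hutch2 {g : ℝ × ℝ → ℝ × ℝ} (hg : ∀ i, Function.Commute g (f i))
    {K : Set (ℝ × ℝ)} (hK : Set.MapsTo g K K) (n : ℕ) :
    Set.MapsTo g ((hutch2 f)^[n] K) ((hutch2 f)^[n] K) := by
  have hcomm : Function.Commute (Set.image g) (hutch2 f) := image_hutch2 hg
  rw [Set.mapsTo_iff_image_subset] at hK ⊢
  rw [(hcomm.iterate_right n).eq]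
  exact hutch2_mono.iterate n hK

theorem hausdorffEDist_hutch2_le {C : NNReal} (hf : ∀ i, LipschitzWith C (f i))
    {s t : Set (ℝ × ℝ)} (hs : s.Nonempty) (ht : t.Nonempty) :
    hausdorffEDist (hutch2 f s) (hutch2 f t) ≤ C * hausdorffEDist s t :=
  hausdorffEDist_iUnion_le.trans (iSup_le fun i => (hf i).hausdorffEDist_image_le_s15 hs ht)

end Hutchinson

section LinearMaps

theorem exists_lipschitzWith_forall {α β ι : Type*} [PseudoEMetricSpace α] [PseudoEMetricSpace β]
    [Finite ι] {f : ι → α → β} (h : ∀ i, ∃ C, LipschitzWith C (f i)) :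
    ∃ C, ∀ i, LipschitzWith C (f i) := by
  choose K hK using h
  obtain ⟨C, hC⟩ := Finite.exists_le K
  exact ⟨C, fun i => (hK i).weaken (hC i)⟩

theorem IsLinearMap.exists_lipschitzWith {𝕜 E F : Type*} [NontriviallyNormedField 𝕜]
    [CompleteSpace 𝕜] [NormedAddCommGroup E] [NormedSpace 𝕜 E] [FiniteDimensional 𝕜 E]
    [NormedAddCommGroup F] [NormedSpace 𝕜 F] {g : E → F} (hg : IsLinearMap 𝕜 g) :
    ∃ C, LipschitzWith C g :=
  ⟨_, (LinearMap.toContinuousLinearMap (hg.mk' g)).lipschitz⟩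

variable {a b c d : ℝ} {g : ℝ × ℝ → ℝ × ℝ}

theorem isLinearMap_of_apply_eq (hg : ∀ v, g v = (a * v.1 + b * v.2, c * v.1 + d * v.2)) :
    IsLinearMap ℝ g where
  map_add v w := by simp only [hg, Prod.fst_add, Prod.snd_add, Prod.mk_add_mk]; congr 1 <;> ring
  map_smul r v := by
    simp only [hg, Prod.smul_fst, Prod.smul_snd, Prod.smul_mk, smul_eq_mul]; congr 1 <;> ring

theorem injective_of_apply_eq (hg : ∀ v, g v = (a * v.1 + b * v.2, c * v.1 + d * v.2))
    (hdet : a * d - b * c ≠ 0) : Function.Injective g := by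
  intro v w h
  rw [hg, hg, Prod.mk.injEq] at h
  have h1 : (a * d - b * c) * (v.1 - w.1) = 0 := by linear_combination d * h.1 - b * h.2
  have h2 : (a * d - b * c) * (v.2 - w.2) = 0 := by linear_combination a * h.2 - c * h.1
  simp only [mul_eq_zero, hdet, sub_eq_zero, false_or] at h1 h2
  exact Prod.ext h1 h2

end LinearMaps

section Slopes

variable {a b c d : ℝ} {g : ℝ × ℝ → ℝ × ℝ}

theorem mem_halfPlane {v : ℝ × ℝ} : v ∈ halfPlane ↔ 0 ≤ v.1 ∧ v ≠ 0 := Iff.rfl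

theorem slopePt_map_of_fst_pos {x y : ℝ} (hx : 0 < x) :
    slopePt (a * x + b * y, c * x + d * y) = homog a b c d (slopePt (x, y)) := by
  have hslope : slopePt (x, y) = ((y / x : ℝ) : EReal) := if_neg hx.ne'
  have hden : b * (y / x) + a = (a * x + b * y) / x := by field_simp; ring
  have hnum : d * (y / x) + c = (c * x + d * y) / x := by field_simp; ring
  simp only [hslope, homog, EReal.coe_ne_top, EReal.coe_ne_bot, if_false, EReal.toReal_coe]
  simp only [hden, hnum, div_eq_zero_iff, hx.ne', or_false, div_pos_iff_of_pos_right hx,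
    div_div_div_cancel_right₀ hx.ne', slopePt]

theorem slopePt_map_of_fst_eq_zero {y : ℝ} (hy : y ≠ 0)
    (hw : (a * 0 + b * y, c * 0 + d * y) ∈ halfPlane) :
    slopePt (a * 0 + b * y, c * 0 + d * y) = homog a b c d (slopePt (0, y)) := by
  obtain ⟨hby, hw⟩ := mem_halfPlane.1 hw
  simp only [mul_zero, zero_add] at hby hw
  rcases eq_or_ne b 0 with rfl | hb
  · have hdy : d * y ≠ 0 := by simpa using hw
    have hd : d ≠ 0 := left_ne_zero_of_mul hdy
    rcases hy.lt_or_gt with hy | hy <;> rcases hd.lt_or_gt with hd | hd <;>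
      simp [slopePt, homog, hy, hd, hy.not_gt, hd.not_gt, mul_pos_iff]
  · have hby : 0 < b * y := hby.lt_of_ne (mul_ne_zero hb hy).symm
    have hslope : slopePt (a * 0 + b * y, c * 0 + d * y) = ((d / b : ℝ) : EReal) := by
      simp [slopePt, hby.ne', mul_div_mul_right _ _ hy]
    rw [hslope]
    by_cases hy : 0 < y <;> simp [slopePt, homog, hy, hb]

theorem slopePt_map {v : ℝ × ℝ} (hv : v ∈ halfPlane)
    (hw : (a * v.1 + b * v.2, c * v.1 + d * v.2) ∈ halfPlane) :
    slopePt (a * v.1 + b * v.2, c * v.1 + d * v.2) = homog a b c d (slopePt v) := by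
  obtain ⟨x, y⟩ := v
  obtain ⟨hx, hv0⟩ := mem_halfPlane.1 hv
  rcases hx.eq_or_lt with rfl | hx
  · exact slopePt_map_of_fst_eq_zero (fun hy => hv0 (Prod.ext rfl hy)) hw
  · exact slopePt_map_of_fst_pos hx

theorem slopes_image (hg : ∀ v, g v = (a * v.1 + b * v.2, c * v.1 + d * v.2))
    (hinj : Function.Injective g) (hP : g '' halfPlane = halfPlane) (K : Set (ℝ × ℝ)) :
    slopes (g '' K) = homog a b c d '' slopes K := by
  rw [slopes, slopes, ← hP, ← Set.image_inter hinj, hP, Set.image_image, Set.image_image]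
  refine Set.image_congr fun v hv => ?_
  have hgv : g v ∈ halfPlane := hP ▸ Set.mem_image_of_mem g hv.2
  rw [hg] at hgv ⊢
  exact slopePt_map hv.2 hgv

theorem slopes_nonempty {K : Set (ℝ × ℝ)} (hK : ∀ x ∈ K, -x ∈ K) {x : ℝ × ℝ} (hx : x ∈ K)
    (hx0 : x ≠ 0) : (slopes K).Nonempty := by
  rcases le_or_gt 0 x.1 with h | h
  · exact ⟨_, x, ⟨hx, h, hx0⟩, rfl⟩
  · exact ⟨_, -x, ⟨hK x hx, (neg_pos.2 h).le, neg_ne_zero.2 hx0⟩, rfl⟩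

end Slopes

theorem slopes_hutch2 {p : ℕ} {a b c d : Fin (p + 1) → ℝ} {f : Fin (p + 1) → ℝ × ℝ → ℝ × ℝ}
    (hf : ∀ i v, f i v = (a i * v.1 + b i * v.2, c i * v.1 + d i * v.2))
    (hdet : ∀ i, a i * d i - b i * c i ≠ 0) (hP : ∀ i, f i '' halfPlane = halfPlane)
    (K : Set (ℝ × ℝ)) :
    slopes (hutch2 f K) = ⋃ i, homog (a i) (b i) (c i) (d i) '' slopes K := by
  simp only [slopes, hutch2, Set.iUnion_inter, Set.image_iUnion]
  exact Set.iUnion_congr fun i =>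
    slopes_image (hf i) (injective_of_apply_eq (hf i) (hdet i)) (hP i) K

/-- Proposition `prop:homo`. For linear maps `f_i` of `ℝ²` with invertible
matrices `[[a_i, b_i],[c_i, d_i]]` mapping `ℙ` onto `ℙ`, if `K₀` is compact, nonempty,
symmetric and star-shaped with respect to the origin and `(H^n(K₀))_n` converges to a set
`L ≠ {0}`, then `L` is symmetric and star-shaped with respect to the origin and its set of
slopes `S_L` is a nonempty invariant set of the Hutchinson operator of the homographic
functions `f̂_i(z) = (d_i z + c_i)/(b_i z + a_i)`. -/
theorem stmt15 {p : ℕ}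
    (a b c d : Fin (p + 1) → ℝ)
    (f : Fin (p + 1) → ℝ × ℝ → ℝ × ℝ)
    (hf : ∀ i v, f i v = (a i * v.1 + b i * v.2, c i * v.1 + d i * v.2))
    (hdet : ∀ i, a i * d i - b i * c i ≠ 0)
    (hP : ∀ i, f i '' halfPlane = halfPlane)
    (K₀ : Set (ℝ × ℝ)) (hK₀c : IsCompact K₀) (hK₀ne : K₀.Nonempty)
    (hK₀sym : ∀ x ∈ K₀, -x ∈ K₀)
    (hK₀star : ∀ x ∈ K₀, ∀ r ∈ Set.Icc (0 : ℝ) 1, r • x ∈ K₀)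
    (L : Set (ℝ × ℝ)) (hLc : IsCompact L) (hLne : L.Nonempty) (hL0 : L ≠ {0})
    (hconv : Tendsto (fun n => hausdorffDist ((hutch2 f)^[n] K₀) L) atTop (𝓝 0)) :
    (∀ x ∈ L, -x ∈ L) ∧
    (∀ x ∈ L, ∀ r ∈ Set.Icc (0 : ℝ) 1, r • x ∈ L) ∧
    (slopes L).Nonempty ∧
    slopes L = ⋃ i, homog (a i) (b i) (c i) (d i) '' slopes L := by
  have hlin i : IsLinearMap ℝ (f i) := isLinearMap_of_apply_eq (hf i)
  obtain ⟨C, hC⟩ := exists_lipschitzWith_forall fun i => (hlin i).exists_lipschitzWith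
  have hcont i : Continuous (f i) := (hC i).continuous
  have hKne := nonempty_iterate_hutch2 (f := f) hK₀ne
  have hlim : Tendsto (fun n => hausdorffEDist ((hutch2 f)^[n] K₀) L) atTop (𝓝 0) := by
    have hfin n : hausdorffEDist ((hutch2 f)^[n] K₀) L ≠ ⊤ :=
      hausdorffEDist_ne_top_of_nonempty_of_bounded (hKne n) hLne
        (isCompact_iterate_hutch2 hcont hK₀c n).isBounded hLc.isBounded
    exact (ENNReal.tendsto_toReal_iff hfin ENNReal.zero_ne_top).1 hconv
  have hinv {g : ℝ × ℝ → ℝ × ℝ} {C' : NNReal} (hg : LipschitzWith C' g)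
      (hcomm : ∀ i, Function.Commute g (f i)) (hg₀ : Set.MapsTo g K₀ K₀) : Set.MapsTo g L L :=
    mapsTo_of_tendsto_hausdorffEDist hg (mapsTo_iterate_hutch2 hcomm hg₀) hKne hLc.isClosed hLne
      hlim
  have hsym : ∀ x ∈ L, -x ∈ L :=
    hinv LipschitzWith.id.neg (fun i v => ((hlin i).map_neg v).symm) hK₀sym
  have hstar : ∀ x ∈ L, ∀ r ∈ Set.Icc (0 : ℝ) 1, r • x ∈ L := fun x hx r hr =>
    hinv (lipschitzWith_smul r) (fun i v => ((hlin i).map_smul r v).symm)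
      (fun y hy => hK₀star y hy r hr) hx
  have hfix : hutch2 f L = L := by
    refine eq_of_tendsto_hausdorffEDist (isCompact_hutch2 hcont hLc).isClosed hLc.isClosed
      (tendsto_hausdorffEDist_apply_of_le (fun n => hausdorffEDist_hutch2_le hC (hKne n) hLne)
        hlim) ?_
    simpa [Function.iterate_succ_apply'] using (tendsto_add_atTop_iff_nat 1).2 hlim
  obtain ⟨x, hxL, hx0⟩ : ∃ x ∈ L, x ≠ 0 := by
    by_contra! h
    exact hL0 (Set.eq_singleton_iff_nonempty_unique_mem.2 ⟨hLne, h⟩)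
  refine ⟨hsym, hstar, slopes_nonempty hsym hxL hx0, ?_⟩
  rw [← slopes_hutch2 hf hdet hP, hfix]
end
end
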